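/- For every n ≥ 0 and all u, v ∈ R, the Möbius-type enumerators satisfy the binomial-type identity b_n(u+v; w) = Σ_{i=0}^{n} C(n,i) · b_i(u; w) · b_{n−i}(v; w). (Theorem 3.4, part 1, Möbius-type case.) -/

import Mathlib

open Finset

variable {R : Type*} [CommRing R] [Algebra ℚ R]

/-- The zeta-type function `w(τ, σ) = ∏_{B a block of σ} w(#{blocks of τ contained in B})`,
for `τ ≤ σ` in the partition lattice. -/
noncomputable def zetaRel (w : ℕ → R) {n : ℕ}
    (τ σ : Finpartition (univ : Finset (Fin n))) : R :=
  ∏ B ∈ σ.parts, w ((τ.parts.filter fun A => A ⊆ B).card)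

open scoped Classical in
/-- The Möbius-type function: `µ^w(π, π) = 1` and
`µ^w(π, σ) = -∑_{π ≤ τ < σ} µ^w(π, τ) w(τ, σ)` for `π < σ`. -/
noncomputable def muW (w : ℕ → R) {n : ℕ} (π : Finpartition (univ : Finset (Fin n)))
    (σ : Finpartition (univ : Finset (Fin n))) : R :=
  if π = σ then 1
  else -∑ τ ∈ (Finset.univ.filter fun τ => π ≤ τ ∧ τ < σ).attach,
        muW w π τ.1 * zetaRel w τ.1 σ
termination_by (Finset.univ.filter fun τ => τ < σ).card
decreasing_by
  classical
  obtain ⟨-, hτσ⟩ := (Finset.mem_filter.mp τ.2).2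
  apply Finset.card_lt_card
  constructor
  · intro x hx
    simp only [Finset.mem_filter, Finset.mem_univ, true_and] at hx ⊢
    exact hx.trans hτσ
  · intro hsub
    have hτ : τ.1 ∈ Finset.univ.filter fun x => x < σ := by simp [hτσ]
    have := hsub hτ
    simp at this

/-- The Möbius-type enumerator `b_n(x; w)`: `b_0 = 1` and
`b_n(x; w) = ∑_{π ∈ Π_n} µ^w(0̂, π) x^{|π|}` for `n ≥ 1`. -/
noncomputable def bEnum (w : ℕ → R) (n : ℕ) (x : R) : R :=
  if n = 0 then 1 else
    ∑ π : Finpartition (univ : Finset (Fin n)), muW w ⊥ π * x ^ π.parts.card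

/-!
Write `μ σ` for `µ^w(0̂, σ)`, defined for partitions of an arbitrary finset. Partitions of
disjoint sets `s`, `t` glue to a partition `σ₁ ∪ σ₂` of `s ∪ t`; the partitions below it are
exactly the `τ₁ ∪ τ₂` with `τᵢ ≤ σᵢ`, and `w(τ₁ ∪ τ₂, σ₁ ∪ σ₂) = w(τ₁, σ₁) w(τ₂, σ₂)`. Since
`w(σ, σ) = 1`, the recursion says `∑_{τ ≤ σ} μ τ w(τ, σ) = [σ = 0̂]`, and strong induction gives
`μ (σ₁ ∪ σ₂) = μ σ₁ μ σ₂`.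

Expanding `(u + v)^{|π|}` over the sets `S` of blocks of `π`, the pair `(π, S)` is the same as
`T = ⋃ S` together with a partition of `T` and one of `s \ T`, so multiplicativity gives
`b_s(u + v) = ∑_{T ⊆ s} b_T(u) b_{s \ T}(v)`. Finally `b_T` only depends on `#T`, and grouping
the `T ⊆ Fin n` by size produces the binomial coefficients.
-/

namespace Finpartition

variable {α : Type*} [DecidableEq α] {s t : Finset α}

lemma filter_subset_eq_singleton {σ : Finpartition s} {B : Finset α} (hB : B ∈ σ.parts) :
    σ.parts.filter (· ⊆ B) = {B} := by
  ext A
  simp only [mem_filter, mem_singleton]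
  refine ⟨fun ⟨hA, hAB⟩ => ?_, by rintro rfl; exact ⟨hB, subset_rfl⟩⟩
  obtain ⟨x, hx⟩ := σ.nonempty_of_mem_parts hA
  exact σ.eq_of_mem_parts hA hB hx (hAB hx)

lemma sup_parts_sdiff (π : Finpartition s) {S : Finset (Finset α)} (hS : S ⊆ π.parts) :
    (π.parts \ S).sup id = s \ S.sup id := by
  ext x
  simp only [mem_sup, mem_sdiff, id, not_exists, not_and]
  constructor
  · rintro ⟨B, ⟨hB, hBS⟩, hxB⟩
    exact ⟨π.le hB hxB, fun C hC hxC => hBS (π.eq_of_mem_parts hB (hS hC) hxB hxC ▸ hC)⟩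
  · rintro ⟨hx, hxS⟩
    obtain ⟨B, hB, hxB⟩ := π.exists_mem hx
    exact ⟨B, ⟨hB, fun hBS => hxS B hBS hxB⟩, hxB⟩

section DisjUnion

@[simps]
def disjUnion (P : Finpartition s) (Q : Finpartition t) (hst : Disjoint s t) :
    Finpartition (s ∪ t) where
  parts := P.parts ∪ Q.parts
  supIndep := by
    rw [supIndep_iff_pairwiseDisjoint, coe_union, Set.pairwiseDisjoint_union]
    exact ⟨P.supIndep.pairwiseDisjoint, Q.supIndep.pairwiseDisjoint,
      fun _ hA _ hB _ => hst.mono (P.le hA) (Q.le hB)⟩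
  sup_parts := by rw [sup_union, P.sup_parts, Q.sup_parts, sup_eq_union]
  bot_notMem := by simp

lemma not_subset_of_mem_parts (hst : Disjoint s t) {Q : Finpartition t} {A : Finset α}
    (hA : A ∈ Q.parts) : ¬A ⊆ s :=
  fun h => Q.ne_bot hA (disjoint_self.mp (hst.mono h (Q.le hA)))

variable {hst : Disjoint s t}

lemma filter_subset_left_disjUnion_parts (P : Finpartition s) (Q : Finpartition t) :
    (P.disjUnion Q hst).parts.filter (· ⊆ s) = P.parts := by
  rw [disjUnion_parts, filter_union, filter_true_of_mem fun A hA => P.le hA,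
    filter_false_of_mem fun A hA => not_subset_of_mem_parts hst hA, union_empty]

lemma filter_subset_right_disjUnion_parts (P : Finpartition s) (Q : Finpartition t) :
    (P.disjUnion Q hst).parts.filter (· ⊆ t) = Q.parts := by
  rw [disjUnion_parts, filter_union,
    filter_false_of_mem fun A hA => not_subset_of_mem_parts hst.symm hA,
    filter_true_of_mem fun A hA => Q.le hA, empty_union]

lemma disjUnion_inj {P P' : Finpartition s} {Q Q' : Finpartition t} :
    P.disjUnion Q hst = P'.disjUnion Q' hst ↔ P = P' ∧ Q = Q' := by
  refine ⟨fun h => ⟨?_, ?_⟩, fun ⟨hP, hQ⟩ => hP ▸ hQ ▸ rfl⟩ <;> ext1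
  · rw [← filter_subset_left_disjUnion_parts (hst := hst) P Q, h,
      filter_subset_left_disjUnion_parts]
  · rw [← filter_subset_right_disjUnion_parts (hst := hst) P Q, h,
      filter_subset_right_disjUnion_parts]

lemma disjoint_parts (hst : Disjoint s t) (P : Finpartition s) (Q : Finpartition t) :
    Disjoint P.parts Q.parts :=
  disjoint_left.mpr fun _ hA hA' => not_subset_of_mem_parts hst hA' (P.le hA)

lemma card_disjUnion_parts (P : Finpartition s) (Q : Finpartition t) :
    #(P.disjUnion Q hst).parts = #P.parts + #Q.parts :=
  card_union_of_disjoint (disjoint_parts hst P Q)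

lemma disjUnion_le_disjUnion_iff {P P' : Finpartition s} {Q Q' : Finpartition t} :
    P.disjUnion Q hst ≤ P'.disjUnion Q' hst ↔ P ≤ P' ∧ Q ≤ Q' := by
  constructor
  · intro h
    refine ⟨fun A hA => ?_, fun A hA => ?_⟩
    · obtain ⟨C, hC, hAC⟩ := h (mem_union_left _ hA)
      refine ⟨C, (mem_union.mp hC).resolve_right fun hC' => ?_, hAC⟩
      exact not_subset_of_mem_parts hst.symm hA ((hAC : A ⊆ C).trans (Q'.le hC'))
    · obtain ⟨C, hC, hAC⟩ := h (mem_union_right _ hA)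
      refine ⟨C, (mem_union.mp hC).resolve_left fun hC' => ?_, hAC⟩
      exact not_subset_of_mem_parts hst hA ((hAC : A ⊆ C).trans (P'.le hC'))
  · rintro ⟨hP, hQ⟩ A hA
    rcases mem_union.mp hA with hA | hA
    · obtain ⟨C, hC, hAC⟩ := hP hA
      exact ⟨C, mem_union_left _ hC, hAC⟩
    · obtain ⟨C, hC, hAC⟩ := hQ hA
      exact ⟨C, mem_union_right _ hC, hAC⟩

lemma disjUnion_bot : (⊥ : Finpartition s).disjUnion ⊥ hst = ⊥ := by
  ext A
  simp [or_and_right, exists_or]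

lemma sup_filter_subset_parts {u : Finset α} (τ : Finpartition u) (hs : s ⊆ u)
    (h : ∀ A ∈ τ.parts, A ⊆ s ∨ Disjoint A s) : (τ.parts.filter (· ⊆ s)).sup id = s := by
  refine (Finset.sup_le fun A hA => (mem_filter.mp hA).2).antisymm fun x hx => ?_
  obtain ⟨A, hA, hxA⟩ := τ.exists_mem (hs hx)
  have hAs : A ⊆ s := (h A hA).resolve_right fun hd => disjoint_left.mp hd hxA hx
  exact mem_sup.mpr ⟨A, mem_filter.mpr ⟨hA, hAs⟩, hxA⟩

lemma exists_disjUnion_eq (hst : Disjoint s t) (τ : Finpartition (s ∪ t))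
    (h : ∀ A ∈ τ.parts, A ⊆ s ∨ A ⊆ t) :
    ∃ (P : Finpartition s) (Q : Finpartition t), P.disjUnion Q hst = τ := by
  refine ⟨τ.ofSubset (filter_subset (· ⊆ s) _) (sup_filter_subset_parts τ subset_union_left ?_),
    τ.ofSubset (filter_subset (· ⊆ t) _) (sup_filter_subset_parts τ subset_union_right ?_), ?_⟩
  · exact fun A hA => (h A hA).imp_right fun hAt => hst.symm.mono_left hAt
  · exact fun A hA => (h A hA).symm.imp_right fun hAs => hst.mono_left hAs
  · ext A
    simp only [disjUnion_parts, ofSubset_parts, ← filter_or, mem_filter, and_iff_left_iff_imp]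
    exact h A

lemma exists_disjUnion_eq_of_le {P : Finpartition s} {Q : Finpartition t}
    {τ : Finpartition (s ∪ t)} (hτ : τ ≤ P.disjUnion Q hst) :
    ∃ (P' : Finpartition s) (Q' : Finpartition t), P' ≤ P ∧ Q' ≤ Q ∧ P'.disjUnion Q' hst = τ := by
  obtain ⟨P', Q', rfl⟩ := exists_disjUnion_eq hst τ fun A hA => by
    obtain ⟨C, hC, hAC⟩ := hτ hA
    exact (mem_union.mp hC).imp (fun hC => hAC.trans (P.le hC)) fun hC => hAC.trans (Q.le hC)
  exact ⟨P', Q', (disjUnion_le_disjUnion_iff.mp hτ).1, (disjUnion_le_disjUnion_iff.mp hτ).2, rfl⟩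

end DisjUnion

section Map

variable {β : Type*} [DecidableEq β] (f : α ↪ β)

@[simps]
def mapEmbedding (P : Finpartition s) : Finpartition (s.map f) where
  parts := P.parts.map (Finset.mapEmbedding f).toEmbedding
  supIndep := by
    rw [supIndep_iff_pairwiseDisjoint, coe_map]
    rintro _ ⟨B, hB, rfl⟩ _ ⟨C, hC, rfl⟩ hBC
    exact (disjoint_map f).mpr (P.disjoint hB hC (ne_of_apply_ne _ hBC))
  sup_parts := by
    ext y
    simp only [mem_sup, mem_map, ← P.sup_parts]
    aesop
  bot_notMem := by simp

@[simps]
noncomputable def comapEmbedding (ρ : Finpartition (s.map f)) : Finpartition s where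
  parts := ρ.parts.image fun B => B.preimage f f.injective.injOn
  supIndep := by
    rw [supIndep_iff_pairwiseDisjoint, coe_image]
    rintro _ ⟨B, hB, rfl⟩ _ ⟨C, hC, rfl⟩ hBC
    exact disjoint_preimage (hs := f.injective.injOn) (ht := f.injective.injOn)
      (ρ.disjoint hB hC fun h => hBC (h ▸ rfl))
  sup_parts := by
    ext x
    simp only [mem_sup, mem_image, id, exists_exists_and_eq_and, mem_preimage]
    refine ⟨fun ⟨B, hB, hxB⟩ => ?_, fun hx => ρ.exists_mem (mem_map_of_mem f hx)⟩
    exact (mem_map' f).mp (ρ.le hB hxB)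
  bot_notMem := by
    simp only [bot_eq_empty, mem_image, not_exists, not_and]
    intro B hB hempty
    obtain ⟨y, hy⟩ := ρ.nonempty_of_mem_parts hB
    obtain ⟨x, -, rfl⟩ := mem_map.mp (ρ.le hB hy)
    exact (eq_empty_iff_forall_notMem.mp hempty) x (mem_preimage.mpr hy)

noncomputable def mapEmbeddingOrderIso : Finpartition s ≃o Finpartition (s.map f) where
  toFun := mapEmbedding f
  invFun := comapEmbedding f
  left_inv P := by
    ext B
    simp [mapEmbedding, comapEmbedding, preimage_map]
  right_inv ρ := by
    have hmap : ∀ B ∈ ρ.parts, (B.preimage f f.injective.injOn).map f = B := fun B hB => by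
      obtain ⟨A, -, rfl⟩ := subset_map_iff.mp (ρ.le hB)
      rw [preimage_map]
    ext1
    rw [mapEmbedding_parts, comapEmbedding_parts, map_eq_image, image_image]
    exact (image_congr hmap).trans image_id
  map_rel_iff' {P Q} := by
    change mapEmbedding f P ≤ mapEmbedding f Q ↔ P ≤ Q
    refine ⟨fun h B hB => ?_, fun h _ hB => ?_⟩
    · obtain ⟨_, hC, hBC⟩ := h (mem_map_of_mem _ hB)
      obtain ⟨C, hC', rfl⟩ := mem_map.mp hC
      exact ⟨C, hC', map_subset_map.mp hBC⟩
    · obtain ⟨B, hB', rfl⟩ := mem_map.mp hB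
      obtain ⟨C, hC, hBC⟩ := h hB'
      exact ⟨C.map f, mem_map_of_mem _ hC, map_subset_map.mpr hBC⟩

@[simp]
lemma mapEmbeddingOrderIso_apply (P : Finpartition s) :
    mapEmbeddingOrderIso f P = mapEmbedding f P :=
  rfl

end Map

section Mobius

open scoped Classical

variable {R : Type*} [CommRing R] (w : ℕ → R)

def zetaW (τ σ : Finpartition s) : R :=
  ∏ B ∈ σ.parts, w #(τ.parts.filter (· ⊆ B))

variable {w}

lemma zetaW_self (hw : w 1 = 1) (σ : Finpartition s) : zetaW w σ σ = 1 :=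
  prod_eq_one fun _ hB => by rw [filter_subset_eq_singleton hB, card_singleton, hw]

lemma zetaW_disjUnion (hst : Disjoint s t) (τ₁ σ₁ : Finpartition s) (τ₂ σ₂ : Finpartition t) :
    zetaW w (τ₁.disjUnion τ₂ hst) (σ₁.disjUnion σ₂ hst) = zetaW w τ₁ σ₁ * zetaW w τ₂ σ₂ := by
  rw [zetaW, disjUnion_parts, prod_union (disjoint_parts hst σ₁ σ₂)]
  congr 1 <;> refine prod_congr rfl fun B hB => ?_ <;> rw [disjUnion_parts, filter_union]
  · rw [filter_false_of_mem fun A hA hAB => not_subset_of_mem_parts hst hA (hAB.trans (σ₁.le hB)),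
      union_empty]
  · rw [filter_false_of_mem fun A hA hAB =>
      not_subset_of_mem_parts hst.symm hA (hAB.trans (σ₂.le hB)), empty_union]

variable (w) in
attribute [local instance] WellFoundedLT.toWellFoundedRelation in
noncomputable def muBot (σ : Finpartition s) : R :=
  if σ = ⊥ then 1 else -∑ τ ∈ (univ.filter (· < σ)).attach, muBot τ.1 * zetaW w τ.1 σ
termination_by σ
decreasing_by exact (mem_filter.mp τ.2).2

@[simp]
lemma muBot_bot : muBot w (⊥ : Finpartition s) = 1 := by
  rw [muBot, if_pos rfl]

lemma muBot_of_ne_bot {σ : Finpartition s} (hσ : σ ≠ ⊥) :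
    muBot w σ = -∑ τ ∈ univ.filter (· < σ), muBot w τ * zetaW w τ σ := by
  rw [muBot, if_neg hσ, sum_attach _ fun τ => muBot w τ * zetaW w τ σ]

lemma sum_muBot_mul_zetaW (hw : w 1 = 1) (σ : Finpartition s) :
    ∑ τ ∈ univ.filter (· ≤ σ), muBot w τ * zetaW w τ σ = if σ = ⊥ then 1 else 0 := by
  have hIic : univ.filter (· ≤ σ) = insert σ (univ.filter (· < σ)) := by
    ext τ
    simp [le_iff_lt_or_eq, or_comm]
  rw [hIic, sum_insert (by simp), zetaW_self hw, mul_one]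
  split_ifs with hσ
  · subst hσ
    simp
  · rw [muBot_of_ne_bot hσ, neg_add_cancel]

lemma image_disjUnion_erase (hst : Disjoint s t) (σ₁ : Finpartition s) (σ₂ : Finpartition t) :
    ((univ.filter (· ≤ σ₁) ×ˢ univ.filter (· ≤ σ₂)).erase (σ₁, σ₂)).image
      (fun p => p.1.disjUnion p.2 hst) = univ.filter (· < σ₁.disjUnion σ₂ hst) := by
  ext τ
  simp only [mem_image, mem_erase, mem_product, mem_filter, mem_univ, true_and, Prod.exists,
    ne_eq, Prod.mk.injEq]
  constructor
  · rintro ⟨τ₁, τ₂, ⟨hne, h₁, h₂⟩, rfl⟩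
    exact lt_of_le_of_ne (disjUnion_le_disjUnion_iff.mpr ⟨h₁, h₂⟩) (mt disjUnion_inj.mp hne)
  · intro hτ
    obtain ⟨τ₁, τ₂, h₁, h₂, rfl⟩ := exists_disjUnion_eq_of_le hτ.le
    exact ⟨τ₁, τ₂, ⟨fun h => hτ.ne (disjUnion_inj.mpr h), h₁, h₂⟩, rfl⟩

lemma muBot_disjUnion (hw : w 1 = 1) (hst : Disjoint s t) (σ₁ : Finpartition s)
    (σ₂ : Finpartition t) : muBot w (σ₁.disjUnion σ₂ hst) = muBot w σ₁ * muBot w σ₂ := by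
  suffices ∀ σ, ∀ σ₁ σ₂, σ₁.disjUnion σ₂ hst = σ → muBot w σ = muBot w σ₁ * muBot w σ₂ from
    this _ σ₁ σ₂ rfl
  intro σ
  induction σ using WellFoundedLT.induction with
  | _ σ ih =>
  rintro σ₁ σ₂ rfl
  by_cases hbot : σ₁ = ⊥ ∧ σ₂ = ⊥
  · obtain ⟨rfl, rfl⟩ := hbot
    simp [disjUnion_bot]
  have hne : σ₁.disjUnion σ₂ hst ≠ ⊥ := by
    rwa [← disjUnion_bot (hst := hst), Ne, disjUnion_inj]
  have hsum : ∑ τ ∈ univ.filter (· < σ₁.disjUnion σ₂ hst),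
        muBot w τ * zetaW w τ (σ₁.disjUnion σ₂ hst)
      = ∑ p ∈ (univ.filter (· ≤ σ₁) ×ˢ univ.filter (· ≤ σ₂)).erase (σ₁, σ₂),
          (muBot w p.1 * zetaW w p.1 σ₁) * (muBot w p.2 * zetaW w p.2 σ₂) := by
    rw [← image_disjUnion_erase, sum_image fun p _ q _ h => Prod.ext_iff.mpr (disjUnion_inj.mp h)]
    refine sum_congr rfl fun p hp => ?_
    have hlt := (image_disjUnion_erase hst σ₁ σ₂).le (mem_image_of_mem _ hp)
    rw [zetaW_disjUnion, ih _ (mem_filter.mp hlt).2 p.1 p.2 rfl]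
    ring
  rw [muBot_of_ne_bot hne, hsum, sum_erase_eq_sub (by simp), sum_product]
  dsimp only
  rw [← sum_mul_sum, sum_muBot_mul_zetaW hw, sum_muBot_mul_zetaW hw, zetaW_self hw, zetaW_self hw]
  rcases not_and_or.mp hbot with h | h <;> simp [h]

lemma muBot_copy {u : Finset α} (h : s = u) (σ : Finpartition s) :
    muBot w (σ.copy h) = muBot w σ := by
  subst h
  rfl

lemma muBot_orderIso {β : Type*} [DecidableEq β] {u : Finset β}
    (e : Finpartition s ≃o Finpartition u) (he : ∀ τ σ, zetaW w (e τ) (e σ) = zetaW w τ σ)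
    (σ : Finpartition s) : muBot w (e σ) = muBot w σ := by
  induction σ using WellFoundedLT.induction with
  | _ σ ih =>
  by_cases hσ : σ = ⊥
  · rw [hσ, e.map_bot, muBot_bot, muBot_bot]
  rw [muBot_of_ne_bot hσ, muBot_of_ne_bot (e.map_bot ▸ e.injective.ne hσ), neg_inj]
  refine (sum_equiv e.toEquiv (fun τ => ?_) fun τ hτ => ?_).symm
  · simp
  · change _ = muBot w (e τ) * zetaW w (e τ) (e σ)
    rw [he, ih τ (mem_filter.mp hτ).2]

lemma zetaW_mapEmbedding {β : Type*} [DecidableEq β] (f : α ↪ β) (τ σ : Finpartition s) :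
    zetaW w (mapEmbedding f τ) (mapEmbedding f σ) = zetaW w τ σ := by
  simp [zetaW, filter_map, Function.comp_def]

end Mobius

end Finpartition

section Enumerator

variable {α : Type*} [DecidableEq α] {R : Type*} [CommRing R] (w : ℕ → R)

noncomputable def bEnumOn (s : Finset α) (x : R) : R :=
  ∑ π : Finpartition s, Finpartition.muBot w π * x ^ #π.parts

lemma bEnumOn_empty (x : R) : bEnumOn w (∅ : Finset α) x = 1 := by
  have h : ∀ π : Finpartition (∅ : Finset α), π = ⊥ := fun π => by
    ext1
    rw [Finpartition.parts_eq_empty_iff.mpr rfl, Finpartition.parts_eq_empty_iff.mpr rfl]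
  rw [bEnumOn, Fintype.sum_eq_single ⊥ fun π hπ => (hπ (h π)).elim, Finpartition.muBot_bot,
    Finpartition.card_bot, card_empty, pow_zero, one_mul]

lemma bEnumOn_map {β : Type*} [DecidableEq β] (f : α ↪ β) (s : Finset α) (x : R) :
    bEnumOn w (s.map f) x = bEnumOn w s x := by
  refine (Fintype.sum_equiv (Finpartition.mapEmbeddingOrderIso f).toEquiv _ _
    fun π => ?_).symm
  have h := Finpartition.muBot_orderIso (Finpartition.mapEmbeddingOrderIso f)
    (fun _ _ => Finpartition.zetaW_mapEmbedding (w := w) f _ _) π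
  simp only [OrderIso.coe_toEquiv, Finpartition.mapEmbeddingOrderIso_apply] at h ⊢
  rw [h, Finpartition.mapEmbedding_parts, card_map]

lemma muW_bot_eq_muBot {n : ℕ} (σ : Finpartition (univ : Finset (Fin n))) :
    muW w ⊥ σ = Finpartition.muBot w σ := by
  classical
  induction σ using WellFoundedLT.induction with
  | _ σ ih =>
  rw [muW]
  split_ifs with hσ
  · rw [← hσ, Finpartition.muBot_bot]
  · rw [Finpartition.muBot_of_ne_bot (Ne.symm hσ),
      sum_attach _ fun τ => muW w ⊥ τ * zetaRel w τ σ]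
    simp only [bot_le, true_and]
    exact congrArg Neg.neg (sum_congr rfl fun τ hτ => by rw [ih τ (mem_filter.mp hτ).2]; rfl)

lemma bEnum_eq_bEnumOn (n : ℕ) (x : R) : bEnum w n x = bEnumOn w (univ : Finset (Fin n)) x := by
  rw [bEnum]
  split_ifs with hn
  · subst hn
    rw [univ_eq_empty, bEnumOn_empty]
  · exact sum_congr rfl fun σ _ => by rw [muW_bot_eq_muBot]

lemma bEnumOn_eq_bEnum_card (s : Finset α) (x : R) : bEnumOn w s x = bEnum w #s x := by
  rw [bEnum_eq_bEnumOn, ← bEnumOn_map w (s.equivFin.symm.toEmbedding.trans (.subtype _)),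
    ← map_map, map_univ_equiv, univ_eq_attach, attach_map_val]

lemma sum_sum_powerset_parts (hw : w 1 = 1) (s : Finset α) (u v : R) :
    ∑ π : Finpartition s, ∑ S ∈ π.parts.powerset,
        Finpartition.muBot w π * (u ^ #S * v ^ (#π.parts - #S))
      = ∑ T ∈ s.powerset, ∑ p : Finpartition T × Finpartition (s \ T),
          Finpartition.muBot w p.1 * u ^ #p.1.parts *
            (Finpartition.muBot w p.2 * v ^ #p.2.parts) := by
  rw [sum_sigma', sum_sigma']
  symm
  refine sum_bij (fun y hy => ⟨(y.2.1.disjUnion y.2.2 disjoint_sdiff).copy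
    (union_sdiff_of_subset (mem_powerset.mp (mem_sigma.mp hy).1)), y.2.1.parts⟩) ?_ ?_ ?_ ?_
  · exact fun y _ => mem_sigma.mpr ⟨mem_univ _, mem_powerset.mpr subset_union_left⟩
  · rintro ⟨T, P, Q⟩ _ ⟨T', P', Q'⟩ _ h
    obtain ⟨hπ, hS⟩ := Sigma.mk.inj_iff.mp h
    obtain rfl : T = T' := by rw [← P.sup_parts, ← P'.sup_parts, eq_of_heq hS]
    have hparts := congrArg Finpartition.parts hπ
    have h' : P.disjUnion Q disjoint_sdiff = P'.disjUnion Q' disjoint_sdiff :=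
      Finpartition.ext hparts
    obtain ⟨rfl, rfl⟩ := Finpartition.disjUnion_inj.mp h'
    rfl
  · rintro ⟨π, S⟩ hx
    have hS : S ⊆ π.parts := mem_powerset.mp (mem_sigma.mp hx).2
    refine ⟨⟨S.sup id, π.ofSubset hS rfl, π.ofSubset sdiff_subset (π.sup_parts_sdiff hS)⟩,
      mem_sigma.mpr ⟨mem_powerset.mpr (Finset.sup_le fun B hB => π.le (hS hB)), mem_univ _⟩,
      Sigma.ext (Finpartition.ext ?_) HEq.rfl⟩
    simp [union_sdiff_of_subset hS]
  · rintro ⟨T, P, Q⟩ -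
    rw [Finpartition.muBot_copy, Finpartition.muBot_disjUnion hw, Finpartition.copy_parts,
      Finpartition.card_disjUnion_parts, Nat.add_sub_cancel_left]
    ring

theorem bEnumOn_add (hw : w 1 = 1) (s : Finset α) (u v : R) :
    bEnumOn w s (u + v) = ∑ T ∈ s.powerset, bEnumOn w T u * bEnumOn w (s \ T) v := by
  rw [bEnumOn]
  simp_rw [← sum_pow_mul_eq_add_pow, mul_sum]
  rw [sum_sum_powerset_parts w hw]
  simp_rw [bEnumOn, sum_mul_sum, Fintype.sum_prod_type]

end Enumerator

theorem bEnum_binomial (w : ℕ → R) (hw : w 1 = 1) (n : ℕ) (u v : R) :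
    bEnum w n (u + v)
      = ∑ i ∈ Finset.range (n + 1), (n.choose i : R) * bEnum w i u * bEnum w (n - i) v := by
  calc bEnum w n (u + v)
      = ∑ T ∈ (univ : Finset (Fin n)).powerset, bEnum w #T u * bEnum w (n - #T) v := by
        rw [bEnum_eq_bEnumOn, bEnumOn_add w hw univ u v]
        refine sum_congr rfl fun T _ => ?_
        rw [bEnumOn_eq_bEnum_card, bEnumOn_eq_bEnum_card, ← compl_eq_univ_sdiff, card_compl,
          Fintype.card_fin]
    _ = _ := by
        rw [sum_powerset_apply_card (fun m => bEnum w m u * bEnum w (n - m) v), card_univ,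
          Fintype.card_fin]
        simp_rw [nsmul_eq_mul, mul_assoc]
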